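/- arXiv:1506.04341 — 5 statements merged into one kernel-verified Lean document; each statement's English description precedes it below -/
import Mathlib

section
/- Let (A,L) be a unital Lipschitz pair whose Monge–Kantorovich metric mk_L has finite diameter D on the state space S(A). For any cut-off r ≥ D, the bounded-Lipschitz metric bl_{L,r}(φ,ψ) = sup{|φ(a)-ψ(a)| : a ∈ sa(A), L(a) ≤ 1, ‖a‖ ≤ r} coincides with mk_L on S(A). -/
/-!
Given `a` with `L a ≤ 1` and a state `ψ`, put `b = a - ψ(a)·1` (`ψ(a)` is real). Since `L 1 = 0`,
`L b ≤ 1`, and `φ(b) - ψ(b) = φ(a) - ψ(a)`. Some state `χ` norms `b`, so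
`‖b‖ = |χ(b)| = |χ(a) - ψ(a)| ≤ mk_L(χ, ψ) ≤ D ≤ r`: `b` is an admissible competitor for `bl_{L,r}`.

The norming state comes from Hahn–Banach: for `λ ∈ σ(b)` with `|λ| = ‖b‖` the functional
`p(b) ↦ p(λ)` on polynomials in `b` is contractive because `p(λ) ∈ σ(p(b))`, and a contractive
unital functional on a C⋆-algebra is positive.
-/

open scoped ENNReal NNReal ComplexOrder

variable {A : Type*} [NormedRing A] [StarRing A] [CStarRing A]
  [NormedAlgebra ℂ A] [CompleteSpace A] [StarModule ℂ A]

/-- A state on a unital C*-algebra. -/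
def IsState (φ : A →L[ℂ] ℂ) : Prop :=
  φ 1 = 1 ∧ ∀ a : A, 0 ≤ φ (star a * a)

/-- The Monge–Kantorovich extended metric of a Lipschitz pair `(A, L)`. -/
noncomputable def mkDist (L : A → ℝ≥0∞) (φ ψ : A →L[ℂ] ℂ) : ℝ≥0∞ :=
  ⨆ (a : A) (_ : IsSelfAdjoint a ∧ L a ≤ 1), (‖φ a - ψ a‖₊ : ℝ≥0∞)

/-- The bounded-Lipschitz metric with cut-off `r` of a Lipschitz pair `(A, L)`. -/
noncomputable def blDist (L : A → ℝ≥0∞) (r : ℝ≥0) (φ ψ : A →L[ℂ] ℂ) : ℝ≥0∞ :=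
  ⨆ (a : A) (_ : IsSelfAdjoint a ∧ L a ≤ 1 ∧ ‖a‖₊ ≤ r), (‖φ a - ψ a‖₊ : ℝ≥0∞)

theorem apply_sub_smul_le_of_apply_eq_zero {M : Type*} [AddCommGroup M] [Module ℝ M]
    {L : M → ℝ≥0∞} (hadd : ∀ a b : M, L (a + b) ≤ L a + L b)
    (hsmul : ∀ (t : ℝ) (a : M), L (t • a) = (‖t‖₊ : ℝ≥0∞) * L a) {e : M} (he : L e = 0)
    (a : M) (t : ℝ) : L (a - t • e) ≤ L a :=
  calc L (a - t • e) = L (a + (-t) • e) := by rw [neg_smul, ← sub_eq_add_neg]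
    _ ≤ L a + L ((-t) • e) := hadd _ _
    _ = L a := by rw [hsmul, he, mul_zero, add_zero]

theorem LinearMap.exists_dual_comp_eq_of_norm_le {𝕜 V E : Type*} [RCLike 𝕜] [AddCommGroup V]
    [Module 𝕜 V] [NormedAddCommGroup E] [NormedSpace 𝕜 E] (P : V →ₗ[𝕜] E) (f : V →ₗ[𝕜] 𝕜)
    (hf : ∀ v, ‖f v‖ ≤ ‖P v‖) : ∃ g : E →L[𝕜] 𝕜, ‖g‖ ≤ 1 ∧ ∀ v, g (P v) = f v := by
  have hker : LinearMap.ker P ≤ LinearMap.ker f := fun v hv =>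
    norm_le_zero_iff.mp (by simpa [LinearMap.mem_ker.mp hv] using hf v)
  let f₀ : LinearMap.range P →ₗ[𝕜] 𝕜 :=
    (LinearMap.ker P).liftQ f hker ∘ₗ P.quotKerEquivRange.symm
  have hf₀ : ∀ v, f₀ ⟨P v, P.mem_range_self v⟩ = f v := fun v => by
    simp [f₀, LinearMap.quotKerEquivRange_symm_apply_image]
  have hbound : ∀ x, ‖f₀ x‖ ≤ 1 * ‖x‖ := by
    rintro ⟨_, v, rfl⟩
    simpa [hf₀] using hf v
  obtain ⟨g, hgf, hg⟩ := exists_extension_norm_eq _ (f₀.mkContinuous 1 hbound)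
  refine ⟨g, hg ▸ f₀.mkContinuous_norm_le zero_le_one hbound, fun v => ?_⟩
  simpa [hf₀] using hgf ⟨P v, P.mem_range_self v⟩

open Polynomial in
theorem exists_norm_le_one_apply_one_apply_eq_of_mem_spectrum {E : Type*} [NormedRing E]
    [NormedAlgebra ℂ E] [CompleteSpace E] [NormOneClass E] {b : E} {z : ℂ}
    (hz : z ∈ spectrum ℂ b) : ∃ g : E →L[ℂ] ℂ, ‖g‖ ≤ 1 ∧ g 1 = 1 ∧ g b = z := by
  obtain ⟨g, hg, hgP⟩ := LinearMap.exists_dual_comp_eq_of_norm_le (aeval b).toLinearMap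
    (aeval z).toLinearMap fun p =>
      spectrum.norm_le_norm_of_mem (spectrum.subset_polynomial_aeval b p ⟨z, hz, rfl⟩)
  exact ⟨g, hg, by simpa using hgP 1, by simpa using hgP X⟩

theorem IsSelfAdjoint.norm_add_smul_I_one_sq_le {A : Type*} [NormedRing A] [StarRing A]
    [CStarRing A] [NormedAlgebra ℂ A] [StarModule ℂ A] [Nontrivial A] {h : A}
    (hh : IsSelfAdjoint h) (t : ℝ) :
    ‖h + (t * Complex.I) • (1 : A)‖ ^ 2 ≤ ‖h‖ ^ 2 + t ^ 2 := by
  have hconj : star ((t : ℂ) * Complex.I) = -(t * Complex.I) := by simp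
  have hstar : star (h + (t * Complex.I) • (1 : A)) * (h + (t * Complex.I) • 1)
      = h * h + ((t : ℂ) ^ 2) • 1 := by
    rw [star_add, hh.star_eq, star_smul, star_one, hconj, add_mul, mul_add, mul_add]
    simp only [smul_mul_assoc, mul_smul_comm, one_mul, mul_one, smul_smul]
    have hsq : (t : ℂ) * Complex.I * -(t * Complex.I) = t ^ 2 := by
      linear_combination (-(t : ℂ) ^ 2) * Complex.I_sq
    rw [hsq, neg_smul]
    abel
  calc ‖h + (t * Complex.I) • (1 : A)‖ ^ 2 = ‖h * h + ((t : ℂ) ^ 2) • 1‖ := by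
        rw [sq, ← CStarRing.norm_star_mul_self, hstar]
    _ ≤ ‖h * h‖ + ‖((t : ℂ) ^ 2) • (1 : A)‖ := norm_add_le _ _
    _ ≤ ‖h‖ ^ 2 + t ^ 2 := by
        gcongr
        · exact (norm_mul_le h h).trans_eq (sq _).symm
        · rw [norm_smul, norm_one, mul_one, norm_pow, Complex.norm_real, Real.norm_eq_abs, sq_abs]

theorem im_apply_eq_zero_of_norm_le_one {A : Type*} [NormedRing A] [StarRing A] [CStarRing A]
    [NormedAlgebra ℂ A] [StarModule ℂ A] {g : A →L[ℂ] ℂ} (hg : ‖g‖ ≤ 1) (hg1 : g 1 = 1)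
    {h : A} (hh : IsSelfAdjoint h) : (g h).im = 0 := by
  have := nontrivial_of_ne (1 : A) 0 fun h₀ => by simp [h₀] at hg1
  have key : ∀ t : ℝ, (g h).re ^ 2 + ((g h).im + t) ^ 2 ≤ ‖h‖ ^ 2 + t ^ 2 := fun t => by
    have hg' : ‖g (h + ((t : ℂ) * Complex.I) • 1)‖ ≤ ‖h + ((t : ℂ) * Complex.I) • 1‖ :=
      g.le_of_opNorm_le hg _ |>.trans_eq (one_mul _)
    have := (pow_le_pow_left₀ (norm_nonneg _) hg' 2).trans (hh.norm_add_smul_I_one_sq_le t)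
    rw [map_add, map_smul, hg1, smul_eq_mul, mul_one, Complex.sq_norm, Complex.normSq_apply] at this
    simp only [Complex.add_re, Complex.mul_re, Complex.ofReal_re, Complex.I_re, mul_zero,
      Complex.ofReal_im, Complex.I_im, mul_one, sub_self, add_zero, Complex.add_im,
      Complex.mul_im] at this
    nlinarith
  -- `key t` reads `re² + im² + 2 * im * t ≤ ‖h‖²`, impossible for all `t` unless `im = 0`.
  by_contra hy
  have := key ((‖h‖ ^ 2 + 1) / (2 * (g h).im))
  have ht : 2 * (g h).im * ((‖h‖ ^ 2 + 1) / (2 * (g h).im)) = ‖h‖ ^ 2 + 1 := by field_simp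
  nlinarith [sq_nonneg (g h).re, sq_nonneg (g h).im]

theorem CStarAlgebra.norm_algebraMap_norm_sub_le {A : Type*} [CStarAlgebra A] [PartialOrder A]
    [StarOrderedRing A] {x : A} (hx : 0 ≤ x) : ‖algebraMap ℝ A ‖x‖ - x‖ ≤ ‖x‖ :=
  (norm_le_iff_le_algebraMap _ (norm_nonneg x)
    (sub_nonneg.mpr (IsSelfAdjoint.of_nonneg hx).le_algebraMap_norm_self)).mpr (sub_le_self _ hx)

theorem isState_of_norm_le_one {A : Type*} [CStarAlgebra A] {g : A →L[ℂ] ℂ} (hg : ‖g‖ ≤ 1)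
    (hg1 : g 1 = 1) : IsState g := by
  let _ := CStarAlgebra.spectralOrder A
  let _ := CStarAlgebra.spectralOrderedRing A
  refine ⟨hg1, fun a => ?_⟩
  set x := star a * a
  have hgx : ‖(‖x‖ : ℂ) - g x‖ ≤ ‖x‖ :=
    calc ‖(‖x‖ : ℂ) - g x‖ = ‖g (algebraMap ℝ A ‖x‖ - x)‖ := by
          simp [Algebra.algebraMap_eq_smul_one, g.map_smul_of_tower, hg1]
      _ ≤ ‖algebraMap ℝ A ‖x‖ - x‖ := g.le_of_opNorm_le hg _ |>.trans_eq (one_mul _)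
      _ ≤ ‖x‖ := CStarAlgebra.norm_algebraMap_norm_sub_le (star_mul_self_nonneg a)
  have hre : 0 ≤ (g x).re := by
    have := (Complex.abs_re_le_norm _).trans hgx
    simp only [Complex.sub_re, Complex.ofReal_re] at this
    linarith [(abs_le.mp this).2]
  exact Complex.nonneg_iff.mpr
    ⟨hre, (im_apply_eq_zero_of_norm_le_one hg hg1 (.star_mul_self a)).symm⟩

theorem IsSelfAdjoint.exists_isState_norm_apply_eq {A : Type*} [CStarAlgebra A] [Nontrivial A]
    {b : A} (hb : IsSelfAdjoint b) : ∃ χ : A →L[ℂ] ℂ, IsState χ ∧ ‖χ b‖₊ = ‖b‖₊ := by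
  obtain ⟨z, hz, hzb⟩ := spectrum.exists_nnnorm_eq_spectralRadius b
  rw [hb.spectralRadius_eq_nnnorm, ENNReal.coe_inj] at hzb
  obtain ⟨χ, hχ, hχ1, hχb⟩ := exists_norm_le_one_apply_one_apply_eq_of_mem_spectrum hz
  exact ⟨χ, isState_of_norm_le_one hχ hχ1, hχb ▸ hzb⟩

theorem IsState.im_apply_eq_zero {A : Type*} [NormedRing A] [StarRing A] [NormedAlgebra ℂ A]
    {ψ : A →L[ℂ] ℂ} (hψ : IsState ψ) {a : A} (ha : IsSelfAdjoint a) : (ψ a).im = 0 := by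
  have hsq : star (1 + a) * (1 + a) = 1 + a + a + star a * a := by
    rw [star_add, star_one, ha.star_eq]
    noncomm_ring
  have h₁ := (Complex.nonneg_iff.mp (hψ.2 (1 + a))).2
  have h₂ := (Complex.nonneg_iff.mp (hψ.2 a)).2
  rw [hsq, map_add, map_add, map_add, hψ.1] at h₁
  simp only [Complex.add_im, Complex.one_im] at h₁
  linarith

theorem nnnorm_sub_re_smul_one_le_of_mkDist_le (L : A → ℝ≥0∞) {D : ℝ≥0}
    (hD : ∀ φ ψ : A →L[ℂ] ℂ, IsState φ → IsState ψ → mkDist L φ ψ ≤ D) {a : A}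
    (ha : IsSelfAdjoint a) (hLa : L a ≤ 1) {ψ : A →L[ℂ] ℂ} (hψ : IsState ψ) :
    ‖a - (ψ a).re • (1 : A)‖₊ ≤ D := by
  have := nontrivial_of_ne (1 : A) 0 fun h₀ => by simpa [h₀] using hψ.1
  have hb : IsSelfAdjoint (a - (ψ a).re • (1 : A)) := ha.sub (.smul (.all _) (.one A))
  let _ : CStarAlgebra A := {}
  obtain ⟨χ, hχ, hχb⟩ := hb.exists_isState_norm_apply_eq
  have hψa : ((ψ a).re : ℂ) = ψ a := Complex.ext rfl (by simp [hψ.im_apply_eq_zero ha])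
  have hχψ : χ (a - (ψ a).re • (1 : A)) = χ a - ψ a := by
    simp [χ.map_smul_of_tower, hχ.1, hψa]
  have hχψ_le : (‖χ a - ψ a‖₊ : ℝ≥0∞) ≤ mkDist L χ ψ := le_iSup₂_of_le a ⟨ha, hLa⟩ le_rfl
  rw [← hχb, hχψ, ← ENNReal.coe_le_coe]
  exact hχψ_le.trans (hD χ ψ hχ hψ)

/-- If the Monge–Kantorovich metric of a unital Lipschitz pair `(A, L)` has diameter at most
`D < ∞` on the state space, then for every cut-off `r ≥ D` the bounded-Lipschitz metric
`bl_{L,r}` coincides with the Monge–Kantorovich metric on the state space. -/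
theorem blDist_eq_mkDist_of_diam_le (L : A → ℝ≥0∞)
    (hadd : ∀ a b : A, L (a + b) ≤ L a + L b)
    (hsmul : ∀ (t : ℝ) (a : A), L (t • a) = (‖t‖₊ : ℝ≥0∞) * L a)
    (hker : ∀ a : A, IsSelfAdjoint a → (L a = 0 ↔ ∃ t : ℝ, a = t • (1 : A)))
    (D r : ℝ≥0)
    (hD : ∀ φ ψ : A →L[ℂ] ℂ, IsState φ → IsState ψ → mkDist L φ ψ ≤ (D : ℝ≥0∞))
    (hr : D ≤ r) :
    ∀ φ ψ : A →L[ℂ] ℂ, IsState φ → IsState ψ → blDist L r φ ψ = mkDist L φ ψ := by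
  intro φ ψ hφ hψ
  have hL1 : L 1 = 0 := (hker 1 (.one A)).mpr ⟨1, (one_smul ℝ 1).symm⟩
  refine le_antisymm (iSup₂_mono' fun a ha => ⟨a, ⟨ha.1, ha.2.1⟩, le_rfl⟩)
    (iSup₂_le fun a ha => ?_)
  set b := a - (ψ a).re • (1 : A)
  have hb : IsSelfAdjoint b := ha.1.sub (.smul (.all _) (.one A))
  have hLb : L b ≤ 1 := (apply_sub_smul_le_of_apply_eq_zero hadd hsmul hL1 a _).trans ha.2
  have hbr : ‖b‖₊ ≤ r := (nnnorm_sub_re_smul_one_le_of_mkDist_le L hD ha.1 ha.2 hψ).trans hr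
  have hφψ : φ b - ψ b = φ a - ψ a := by
    simp [b, φ.map_smul_of_tower, ψ.map_smul_of_tower, hφ.1, hψ.1]
  exact le_iSup₂_of_le b ⟨hb, hLb, hbr⟩ (by rw [hφψ])
end

section
/- Let (A,L) be a unital Lipschitz pair with mk_L(φ,ψ) ≤ D for all states φ,ψ. Then for every self-adjoint a with L(a) ≤ 1 there exists t ∈ ℝ such that ‖a - t·1‖ ≤ D. -/
/-!
Fix a state `ψ` and put `t = ψ(a)`; it is real since unital contractive functionals take real
values on self-adjoint elements. Some point of the spectrum of the self-adjoint element
`b = a - t·1` has modulus `‖b‖`; a character of the C⋆-algebra generated by `b` taking that value,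
extended to `A` by Hahn–Banach, is a unital contraction `φ` with `|φ(b)| = ‖b‖`. Unital
contractions are states, so `‖a - t·1‖ = |φ(a) - ψ(a)| ≤ mk_L(φ, ψ) ≤ D`.
-/

open scoped ENNReal NNReal ComplexOrder

variable {A : Type*} [NormedRing A] [StarRing A] [CStarRing A]
  [NormedAlgebra ℂ A] [CompleteSpace A] [StarModule ℂ A]

open Complex

section CStarAlgebra

variable {B : Type*} [CStarAlgebra B] [Nontrivial B]

lemma IsSelfAdjoint.norm_add_algebraMap_I_mul_sq_le {y : B} (hy : IsSelfAdjoint y) (t : ℝ) :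
    ‖y + algebraMap ℂ B (I * t)‖ ^ 2 ≤ ‖y‖ ^ 2 + t ^ 2 := by
  set z := algebraMap ℂ B (I * t)
  have hz : star z = -z := by
    simp only [z, ← algebraMap_star_comm, ← map_neg]
    congr 1
    simp
  have hzz : z * z = -algebraMap ℂ B ((t : ℂ) ^ 2) := by
    rw [← map_mul, ← map_neg]
    congr 1
    ring_nf
    simp
  have hzy : z * y = y * z := Algebra.commutes _ _
  have hstar : star (y + z) * (y + z) = y * y + algebraMap ℂ B ((t : ℂ) ^ 2) := by
    simp only [star_add, hy.star_eq, hz, add_mul, mul_add, neg_mul, hzy, hzz]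
    abel
  calc ‖y + z‖ ^ 2 = ‖y * y + algebraMap ℂ B ((t : ℂ) ^ 2)‖ := by
        rw [sq, ← CStarRing.norm_star_mul_self, hstar]
    _ ≤ ‖y‖ ^ 2 + t ^ 2 := by
        refine (norm_add_le _ _).trans (add_le_add ((norm_mul_le y y).trans_eq (sq _).symm) ?_)
        rw [norm_algebraMap']
        simp

namespace ContinuousLinearMap

variable {φ : StrongDual ℂ B}

lemma im_apply_eq_zero_of_isSelfAdjoint (hφ : ‖φ‖ ≤ 1) (hφ1 : φ 1 = 1) {y : B}
    (hy : IsSelfAdjoint y) : (φ y).im = 0 := by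
  -- `|φ y + i t|² ≤ ‖y + i t‖² ≤ ‖y‖² + t²` for every real `t` forces `Im (φ y) = 0`.
  set β := (φ y).im
  have key (t : ℝ) : (φ y).re ^ 2 + (β + t) ^ 2 ≤ ‖y‖ ^ 2 + t ^ 2 :=
    calc (φ y).re ^ 2 + (β + t) ^ 2 = ‖φ (y + algebraMap ℂ B (I * t))‖ ^ 2 := by
          rw [map_add, Algebra.algebraMap_eq_smul_one, map_smul, hφ1, Complex.sq_norm,
            normSq_apply]
          simp [β]
          ring
      _ ≤ ‖y + algebraMap ℂ B (I * t)‖ ^ 2 := by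
          gcongr
          exact (φ.le_of_opNorm_le hφ _).trans_eq (one_mul _)
      _ ≤ ‖y‖ ^ 2 + t ^ 2 := hy.norm_add_algebraMap_I_mul_sq_le t
  by_contra hβ
  have ht := mul_div_cancel₀ (‖y‖ ^ 2 + 1) (mul_ne_zero two_ne_zero hβ)
  nlinarith [key ((‖y‖ ^ 2 + 1) / (2 * β)), sq_nonneg (φ y).re, sq_nonneg β]

lemma re_apply_nonneg_of_nonneg [PartialOrder B] [StarOrderedRing B] (hφ : ‖φ‖ ≤ 1)
    (hφ1 : φ 1 = 1) {x : B} (hx : 0 ≤ x) : 0 ≤ (φ x).re := by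
  set c := algebraMap ℝ B ‖x‖ - x
  have hc : ‖c‖ ≤ ‖x‖ := by
    have hc₀ : 0 ≤ c := sub_nonneg.2 (IsSelfAdjoint.of_nonneg hx).le_algebraMap_norm_self
    simpa [norm_algebraMap'] using CStarAlgebra.norm_le_norm_of_nonneg_of_le hc₀ (sub_le_self _ hx)
  have hφc : φ c = ‖x‖ - φ x := by
    simp [c, Algebra.algebraMap_eq_smul_one, hφ1]
  have : ‖x‖ - (φ x).re ≤ ‖x‖ :=
    calc ‖x‖ - (φ x).re = (φ c).re := by simp [hφc]
      _ ≤ ‖φ c‖ := re_le_norm _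
      _ ≤ ‖x‖ := (φ.le_of_opNorm_le hφ c).trans (by simpa using hc)
  linarith

lemma isState_of_norm_le_one (hφ : ‖φ‖ ≤ 1) (hφ1 : φ 1 = 1) : IsState φ := by
  let := CStarAlgebra.spectralOrder B
  let := CStarAlgebra.spectralOrderedRing B
  refine ⟨hφ1, fun a => Complex.nonneg_iff.2 ⟨?_, ?_⟩⟩
  · exact re_apply_nonneg_of_nonneg hφ hφ1 (star_mul_self_nonneg a)
  · exact (im_apply_eq_zero_of_isSelfAdjoint hφ hφ1 (.star_mul_self a)).symm

end ContinuousLinearMap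

open StarAlgebra in
lemma exists_norm_le_one_apply_eq_of_mem_spectrum {b : B} [IsStarNormal b] {z : ℂ}
    (hz : z ∈ spectrum ℂ b) : ∃ φ : StrongDual ℂ B, ‖φ‖ ≤ 1 ∧ φ 1 = 1 ∧ φ b = z := by
  obtain ⟨f, hf⟩ := (elemental.bijective_characterSpaceToSpectrum b).2 ⟨z, hz⟩
  -- `elemental ℂ b` and its underlying submodule are the same subtype of `B`.
  let f₀ : StrongDual ℂ (Subalgebra.toSubmodule (elemental ℂ b).toSubalgebra) :=
    (f : WeakDual ℂ (elemental ℂ b))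
  obtain ⟨φ, hφ, hφn⟩ := exists_extension_norm_eq _ f₀
  refine ⟨φ, hφn ▸ (AlgHom.toContinuousLinearMap_norm (WeakDual.CharacterSpace.equivAlgHom f)).le,
    ?_, ?_⟩
  · exact (hφ ⟨1, (elemental ℂ b).one_mem⟩).trans (map_one f)
  · exact (hφ ⟨b, elemental.self_mem ℂ b⟩).trans (congrArg Subtype.val hf)

lemma IsStarNormal.exists_norm_le_one_norm_apply_eq (b : B) [IsStarNormal b] :
    ∃ φ : StrongDual ℂ B, ‖φ‖ ≤ 1 ∧ φ 1 = 1 ∧ ‖φ b‖ = ‖b‖ := by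
  obtain ⟨z, hz, hzn⟩ := spectrum.exists_nnnorm_eq_spectralRadius b
  obtain ⟨φ, hφ, hφ1, rfl⟩ := exists_norm_le_one_apply_eq_of_mem_spectrum hz
  rw [IsStarNormal.spectralRadius_eq_nnnorm, ENNReal.coe_inj] at hzn
  exact ⟨φ, hφ, hφ1, congrArg NNReal.toReal hzn⟩

end CStarAlgebra

lemma norm_sub_le_of_mkDist_le {B : Type*} [NormedRing B] [StarRing B] [NormedAlgebra ℂ B]
    {L : B → ℝ≥0∞} {φ ψ : B →L[ℂ] ℂ} {D : ℝ≥0} (hD : mkDist L φ ψ ≤ D) {a : B}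
    (ha : IsSelfAdjoint a) (hLa : L a ≤ 1) : ‖φ a - ψ a‖ ≤ D := by
  have : (‖φ a - ψ a‖₊ : ℝ≥0∞) ≤ D :=
    (le_iSup₂ (f := fun c (_ : IsSelfAdjoint c ∧ L c ≤ 1) => (‖φ c - ψ c‖₊ : ℝ≥0∞)) a
      ⟨ha, hLa⟩).trans hD
  exact_mod_cast this

theorem exists_real_smul_one_norm_sub_le_general (L : A → ℝ≥0∞)
    (D : ℝ≥0)
    (hD : ∀ φ ψ : A →L[ℂ] ℂ, IsState φ → IsState ψ → mkDist L φ ψ ≤ (D : ℝ≥0∞)) :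
    ∀ a : A, IsSelfAdjoint a → L a ≤ 1 → ∃ t : ℝ, ‖a - t • (1 : A)‖ ≤ (D : ℝ) := by
  intro a ha hLa
  let : CStarAlgebra A := {}
  rcases subsingleton_or_nontrivial A with _ | _
  · exact ⟨0, by simp [Subsingleton.elim (a - _) 0]⟩
  obtain ⟨ψ, hψ, hψ1, -⟩ := IsStarNormal.exists_norm_le_one_norm_apply_eq (1 : A)
  set t := (ψ a).re
  have hψa : ψ a = t := Complex.ext (ofReal_re _).symm
    ((ψ.im_apply_eq_zero_of_isSelfAdjoint hψ hψ1 ha).trans (ofReal_im _).symm)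
  have : IsStarNormal (a - t • 1) := (ha.sub ((IsSelfAdjoint.all t).smul (.one A))).isStarNormal
  obtain ⟨φ, hφ, hφ1, hφb⟩ := IsStarNormal.exists_norm_le_one_norm_apply_eq (a - t • 1)
  refine ⟨t, ?_⟩
  calc ‖a - t • 1‖ = ‖φ a - ψ a‖ := by
        rw [← hφb, map_sub, φ.map_smul_of_tower, hφ1, hψa, Complex.real_smul, mul_one]
    _ ≤ D := norm_sub_le_of_mkDist_le (hD φ ψ (φ.isState_of_norm_le_one hφ hφ1)
        (ψ.isState_of_norm_le_one hψ hψ1)) ha hLa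

/-- If the Monge–Kantorovich metric of a unital Lipschitz pair `(A, L)` is bounded by `D` on
the state space, then every self-adjoint `a` with `L(a) ≤ 1` is within distance `D` of the
scalars: there is `t ∈ ℝ` with `‖a - t·1‖ ≤ D`. -/
theorem exists_real_smul_one_norm_sub_le (L : A → ℝ≥0∞)
    (hadd : ∀ a b : A, L (a + b) ≤ L a + L b)
    (hsmul : ∀ (t : ℝ) (a : A), L (t • a) = (‖t‖₊ : ℝ≥0∞) * L a)
    (hker : ∀ a : A, IsSelfAdjoint a → (L a = 0 ↔ ∃ t : ℝ, a = t • (1 : A)))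
    (D : ℝ≥0)
    (hD : ∀ φ ψ : A →L[ℂ] ℂ, IsState φ → IsState ψ → mkDist L φ ψ ≤ (D : ℝ≥0∞)) :
    ∀ a : A, IsSelfAdjoint a → L a ≤ 1 → ∃ t : ℝ, ‖a - t • (1 : A)‖ ≤ (D : ℝ) :=
  exists_real_smul_one_norm_sub_le_general L D hD
end

section
/- Let A be a C*-algebra, μ a state on A, and for a ∈ A define the standard deviation stddev_μ(a) = max{‖π(a) - μ(a)·1‖_{L²(A,μ)}, ‖π(a*) - μ(a*)·1‖_{L²(A,μ)}} via the GNS representation. Then for self-adjoint a, b: stddev_μ(ab) ≤ ‖a‖ · stddev_μ(b) + stddev_μ(a) · ‖b‖. -/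
open scoped ComplexOrder

variable {A : Type*} [NormedRing A] [StarRing A] [CStarRing A]
  [NormedAlgebra ℂ A] [CompleteSpace A] [StarModule ℂ A]

/-- The standard deviation of `c ∈ A` under the state `μ`:
`stddev_μ(c) = max{ ‖π(c) - μ(c)1‖_{L²(A,μ)}, ‖π(c*) - μ(c*)1‖_{L²(A,μ)} }`, expressed via
the GNS construction as `max{ √(μ(c*c) - |μ(c)|²), √(μ(cc*) - |μ(c)|²) }`. -/
noncomputable def stddev (μ : A →L[ℂ] ℂ) (c : A) : ℝ :=
  max (Real.sqrt ((μ (star c * c)).re - ‖μ c‖ ^ 2))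
      (Real.sqrt ((μ (c * star c)).re - ‖μ c‖ ^ 2))

open scoped InnerProductSpace

/-!
In the GNS space of `μ` the class `ξ` of `1` is a unit vector with `⟪ξ, π(c)ξ⟫ = μ(c)`, so
`√(μ(c⋆c) - |μ(c)|²)` is the norm of the component of `π(c)ξ` orthogonal to `ξ`. Splitting
`π(a)π(b)ξ = π(a)(π(b)ξ - μ(b)ξ) + μ(b)π(a)ξ` and projecting onto `ξ^⊥`, which does not
increase norms, bounds the deviation of `ab` by `‖a‖` times that of `b` plus `|μ(b)| ≤ ‖b‖`
times that of `a`.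
For self-adjoint `a, b` the second half of `stddev μ (ab)` is the deviation of `(ab)⋆ = ba`,
bounded in the same way.
-/

section Deviation

variable {𝕜 E : Type*} [RCLike 𝕜] [SeminormedAddCommGroup E] [InnerProductSpace 𝕜 E] {ξ : E}

theorem norm_sub_inner_smul_sq (hξ : ‖ξ‖ = 1) (v : E) :
    ‖v - ⟪ξ, v⟫_𝕜 • ξ‖ ^ 2 = ‖v‖ ^ 2 - ‖⟪ξ, v⟫_𝕜‖ ^ 2 := by
  rw [@norm_sub_sq 𝕜, inner_smul_right, norm_smul, hξ, mul_one, ← inner_conj_symm v ξ,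
    RCLike.mul_conj, ← RCLike.ofReal_pow, RCLike.ofReal_re]
  ring

theorem norm_sub_inner_smul_le (hξ : ‖ξ‖ = 1) (v : E) : ‖v - ⟪ξ, v⟫_𝕜 • ξ‖ ≤ ‖v‖ := by
  refine (sq_le_sq₀ (norm_nonneg _) (norm_nonneg _)).mp ?_
  rw [norm_sub_inner_smul_sq hξ]
  nlinarith [norm_nonneg ⟪ξ, v⟫_𝕜]

theorem norm_map_sub_inner_smul_le (hξ : ‖ξ‖ = 1) (S : E →L[𝕜] E) (v : E) :
    ‖S v - ⟪ξ, S v⟫_𝕜 • ξ‖ ≤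
      ‖S‖ * ‖v - ⟪ξ, v⟫_𝕜 • ξ‖ + ‖⟪ξ, v⟫_𝕜‖ * ‖S ξ - ⟪ξ, S ξ⟫_𝕜 • ξ‖ := by
  set w := v - ⟪ξ, v⟫_𝕜 • ξ
  have hsplit : S v - ⟪ξ, S v⟫_𝕜 • ξ =
      (S w - ⟪ξ, S w⟫_𝕜 • ξ) + ⟪ξ, v⟫_𝕜 • (S ξ - ⟪ξ, S ξ⟫_𝕜 • ξ) := by
    simp only [w, map_sub, map_smul, inner_sub_right, inner_smul_right, smul_sub, sub_smul,
      smul_smul]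
    abel
  calc ‖S v - ⟪ξ, S v⟫_𝕜 • ξ‖
      ≤ ‖S w - ⟪ξ, S w⟫_𝕜 • ξ‖ + ‖⟪ξ, v⟫_𝕜‖ * ‖S ξ - ⟪ξ, S ξ⟫_𝕜 • ξ‖ := by
        rw [hsplit, ← norm_smul]; exact norm_add_le _ _
    _ ≤ ‖S w‖ + ‖⟪ξ, v⟫_𝕜‖ * ‖S ξ - ⟪ξ, S ξ⟫_𝕜 • ξ‖ := by
        gcongr; exact norm_sub_inner_smul_le hξ _
    _ ≤ ‖S‖ * ‖w‖ + ‖⟪ξ, v⟫_𝕜‖ * ‖S ξ - ⟪ξ, S ξ⟫_𝕜 • ξ‖ := by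
        gcongr; exact S.le_opNorm w

end Deviation

namespace PositiveLinearMap

variable {B : Type*} [CStarAlgebra B] [PartialOrder B] [StarOrderedRing B] (f : B →ₚ[ℂ] ℂ)

noncomputable def gnsDeviation (c : B) : ℝ := ‖f.toPreGNS c - f c • f.toPreGNS 1‖

lemma inner_toPreGNS_one_left (c : B) : ⟪f.toPreGNS 1, f.toPreGNS c⟫_ℂ = f c := by
  simp [preGNS_inner_def]

lemma norm_toPreGNS_sq (c : B) : ‖f.toPreGNS c‖ ^ 2 = (f (star c * c)).re := by
  rw [preGNS_norm_def, Real.sq_sqrt]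
  · rfl
  · exact (RCLike.nonneg_iff.mp (f.map_nonneg (star_mul_self_nonneg c))).1

lemma norm_toPreGNS_one (hf : f 1 = 1) : ‖f.toPreGNS 1‖ = 1 := by
  simp [preGNS_norm_def, hf]

lemma norm_leftMulMapPreGNS_le (a : B) : ‖f.leftMulMapPreGNS a‖ ≤ ‖a‖ :=
  LinearMap.mkContinuous_norm_le _ (norm_nonneg a) _

lemma norm_apply_le_of_map_one (hf : f 1 = 1) (c : B) : ‖f c‖ ≤ ‖c‖ := by
  have hξ := f.norm_toPreGNS_one hf
  calc ‖f c‖ = ‖⟪f.toPreGNS 1, f.leftMulMapPreGNS c (f.toPreGNS 1)⟫_ℂ‖ := by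
        simp [inner_toPreGNS_one_left]
    _ ≤ ‖f.leftMulMapPreGNS c (f.toPreGNS 1)‖ := by
        simpa [hξ] using norm_inner_le_norm (𝕜 := ℂ) (f.toPreGNS 1) _
    _ ≤ ‖c‖ := by
        simpa [hξ] using
          (f.leftMulMapPreGNS c).le_of_opNorm_le (f.norm_leftMulMapPreGNS_le c) (f.toPreGNS 1)

lemma sqrt_re_sub_norm_sq_eq_gnsDeviation (hf : f 1 = 1) (c : B) :
    √((f (star c * c)).re - ‖f c‖ ^ 2) = f.gnsDeviation c := by
  rw [gnsDeviation, ← norm_toPreGNS_sq, ← f.inner_toPreGNS_one_left c,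
    ← norm_sub_inner_smul_sq (f.norm_toPreGNS_one hf), Real.sqrt_sq (norm_nonneg _)]

lemma gnsDeviation_mul_le (hf : f 1 = 1) (a b : B) :
    f.gnsDeviation (a * b) ≤ ‖a‖ * f.gnsDeviation b + f.gnsDeviation a * ‖b‖ := by
  have h := norm_map_sub_inner_smul_le (f.norm_toPreGNS_one hf) (f.leftMulMapPreGNS a)
    (f.toPreGNS b)
  simp only [leftMulMapPreGNS_apply, ofPreGNS_toPreGNS, inner_toPreGNS_one_left, mul_one] at h
  calc f.gnsDeviation (a * b)
      ≤ ‖f.leftMulMapPreGNS a‖ * f.gnsDeviation b + ‖f b‖ * f.gnsDeviation a := h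
    _ ≤ ‖a‖ * f.gnsDeviation b + ‖b‖ * f.gnsDeviation a := by
        gcongr
        exacts [norm_nonneg _, f.norm_leftMulMapPreGNS_le a, norm_nonneg _,
          f.norm_apply_le_of_map_one hf b]
    _ = ‖a‖ * f.gnsDeviation b + f.gnsDeviation a * ‖b‖ := by ring

lemma stddev_eq_max_gnsDeviation {μ : B →L[ℂ] ℂ} (hμf : ⇑μ = ⇑f) (hf : f 1 = 1) (c : B) :
    stddev μ c = max (f.gnsDeviation c) (f.gnsDeviation (star c)) := by
  have hstar : ‖f (star c)‖ = ‖f c‖ := by rw [map_star, norm_star]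
  rw [stddev, hμf, ← hstar, ← f.sqrt_re_sub_norm_sq_eq_gnsDeviation hf,
    ← f.sqrt_re_sub_norm_sq_eq_gnsDeviation hf, star_star, hstar]

end PositiveLinearMap

namespace ContinuousLinearMap

variable {B : Type*} [CStarAlgebra B] [PartialOrder B] [StarOrderedRing B]

noncomputable def toPositiveLinearMap (μ : B →L[ℂ] ℂ) (hμ : ∀ a, 0 ≤ μ (star a * a)) :
    B →ₚ[ℂ] ℂ :=
  .mk₀ μ fun _ hx ↦ by
    obtain ⟨s, rfl⟩ := CStarAlgebra.nonneg_iff_eq_star_mul_self.mp hx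
    exact hμ s

end ContinuousLinearMap

/-- Rieffel's Leibniz inequality for the standard deviation: for a state `μ` on a
C*-algebra `A` and self-adjoint `a, b ∈ A`,
`stddev_μ(ab) ≤ ‖a‖·stddev_μ(b) + stddev_μ(a)·‖b‖`. -/
theorem stddev_mul_le (μ : A →L[ℂ] ℂ) (hμ1 : μ 1 = 1)
    (hμpos : ∀ a : A, 0 ≤ μ (star a * a))
    (a b : A) (ha : IsSelfAdjoint a) (hb : IsSelfAdjoint b) :
    stddev μ (a * b) ≤ ‖a‖ * stddev μ b + stddev μ a * ‖b‖ := by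
  let _ : CStarAlgebra A := { }
  let _ := CStarAlgebra.spectralOrder A
  let _ := CStarAlgebra.spectralOrderedRing A
  let f := μ.toPositiveLinearMap hμpos
  have hf : f 1 = 1 := hμ1
  have hstddev := f.stddev_eq_max_gnsDeviation (μ := μ) rfl hf
  rw [hstddev, hstddev, hstddev, ha.star_eq, hb.star_eq, star_mul, ha.star_eq, hb.star_eq,
    max_self, max_self]
  have hab := f.gnsDeviation_mul_le hf a b
  have hba := f.gnsDeviation_mul_le hf b a
  exact max_le (by linarith) (by linarith)
end

section
/- Let A be a unital C*-algebra, π a faithful unital *-representation on a Hilbert space H, and D a self-adjoint (possibly unbounded) operator on H. Define L(a) = ‖[D, π(a)]‖ (operator norm of the closure of the commutator, ∞ if unbounded) for a ∈ A. Then for every invertible a ∈ A in the domain of L: L(a⁻¹) ≤ ‖a⁻¹‖² · L(a). -/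
/-!
If `S` is a two-sided inverse of the bounded operator `T`, then on the domain of `D` one has
`[D, S] = -S [D, T] S`, so any bound `C` for `[D, T]` yields the bound `‖S‖² C` for `[D, S]`.
For `T = π a` and `S = π a⁻¹`, a star algebra homomorphism out of a C⋆-algebra is contractive,
so `‖π a⁻¹‖ ≤ ‖a⁻¹‖`.
-/

open scoped ENNReal NNReal

section Commutator

variable {𝕜 E : Type*} [NontriviallyNormedField 𝕜] [NormedAddCommGroup E] [NormedSpace 𝕜 E]
  {dom : Submodule 𝕜 E} (D : dom →ₗ[𝕜] E)

/-- The infimum of this set is `‖[D, T]‖`, which is `∞` when `T` does not preserve `dom` or the commutator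
is unbounded. -/
def commutatorBounds (T : E →L[𝕜] E) : Set ℝ≥0∞ :=
  {C | (∀ x ∈ dom, T x ∈ dom) ∧ ∀ (x : E) (hx : x ∈ dom) (hTx : T x ∈ dom),
    (‖D ⟨T x, hTx⟩ - T (D ⟨x, hx⟩)‖₊ : ℝ≥0∞) ≤ C * ‖x‖₊}

theorem zero_mem_commutatorBounds_zero : (0 : ℝ≥0∞) ∈ commutatorBounds D 0 := by
  refine ⟨fun _ _ ↦ zero_mem dom, fun x hx h0 ↦ ?_⟩
  have hD0 : D ⟨(0 : E →L[𝕜] E) x, h0⟩ = 0 := map_zero D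
  rw [hD0]
  simp

variable {T S : E →L[𝕜] E}

theorem commutator_eq_neg_comp_commutator_of_inverse (hTS : T * S = 1) (hST : S * T = 1)
    {x : E} (hx : x ∈ dom) (hSx : S x ∈ dom) (hTSx : T (S x) ∈ dom) :
    D ⟨S x, hSx⟩ - S (D ⟨x, hx⟩) = -S (D ⟨T (S x), hTSx⟩ - T (D ⟨S x, hSx⟩)) := by
  have hcancel : (⟨T (S x), hTSx⟩ : dom) = ⟨x, hx⟩ := Subtype.ext (congrArg (· x) hTS)
  rw [hcancel, map_sub, ← mul_apply_eq_comp, hST, one_apply_eq_self, neg_sub]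

theorem mul_mem_commutatorBounds_of_inverse (hTS : T * S = 1) (hST : S * T = 1)
    (hSdom : ∀ x ∈ dom, S x ∈ dom) {C : ℝ≥0∞} (hC : C ∈ commutatorBounds D T) :
    (‖S‖₊ : ℝ≥0∞) ^ 2 * C ∈ commutatorBounds D S := by
  obtain ⟨hTdom, hbound⟩ := hC
  refine ⟨hSdom, fun x hx hSx ↦ ?_⟩
  have hTSx := hTdom _ hSx
  have hS : ∀ v, (‖S v‖₊ : ℝ≥0∞) ≤ ‖S‖₊ * ‖v‖₊ := fun v ↦ by exact_mod_cast S.le_opNNNorm v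
  calc (‖D ⟨S x, hSx⟩ - S (D ⟨x, hx⟩)‖₊ : ℝ≥0∞)
      = ‖S (D ⟨T (S x), hTSx⟩ - T (D ⟨S x, hSx⟩))‖₊ := by
        rw [commutator_eq_neg_comp_commutator_of_inverse D hTS hST hx hSx hTSx, nnnorm_neg]
    _ ≤ ‖S‖₊ * (C * ‖S x‖₊) := (hS _).trans (by gcongr; exact hbound _ hSx hTSx)
    _ ≤ ‖S‖₊ * (C * (‖S‖₊ * ‖x‖₊)) := by gcongr; exact hS x
    _ = ‖S‖₊ ^ 2 * C * ‖x‖₊ := by ring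

theorem sInf_commutatorBounds_le_of_inverse (hTS : T * S = 1) (hST : S * T = 1)
    (hSdom : ∀ x ∈ dom, S x ∈ dom) :
    sInf (commutatorBounds D S) ≤ (‖S‖₊ : ℝ≥0∞) ^ 2 * sInf (commutatorBounds D T) := by
  rcases eq_or_ne S 0 with rfl | hS₀
  · exact (sInf_le (zero_mem_commutatorBounds_zero D)).trans bot_le
  have hk₀ : (‖S‖₊ : ℝ≥0∞) ^ 2 ≠ 0 := by simpa using hS₀
  have hk : (‖S‖₊ : ℝ≥0∞) ^ 2 ≠ ∞ := by simp
  have hmul_sInf : (‖S‖₊ : ℝ≥0∞) ^ 2 * sInf (commutatorBounds D T) =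
      ⨅ C ∈ commutatorBounds D T, (‖S‖₊ : ℝ≥0∞) ^ 2 * C := by
    simp_rw [sInf_eq_iInf, ENNReal.mul_iInf_of_ne hk₀ hk]
  rw [hmul_sInf]
  exact le_iInf₂ fun C hC ↦ sInf_le (mul_mem_commutatorBounds_of_inverse D hTS hST hSdom hC)

end Commutator

theorem commutator_lipnorm_strong_leibniz_general {A H : Type*}
    [NormedRing A] [StarRing A] [CStarRing A] [NormedAlgebra ℂ A]
    [CompleteSpace A] [StarModule ℂ A]
    [NormedAddCommGroup H] [InnerProductSpace ℂ H] [CompleteSpace H]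
    (π : A →⋆ₐ[ℂ] (H →L[ℂ] H))
    (dom : Submodule ℂ H)
    (D : dom →ₗ[ℂ] H)
    (L : A → ℝ≥0∞)
    (hL : ∀ a : A, L a = sInf {C : ℝ≥0∞ |
      (∀ x ∈ dom, π a x ∈ dom) ∧
      ∀ (x : H) (hx : x ∈ dom) (hax : π a x ∈ dom),
        (‖D ⟨π a x, hax⟩ - π a (D ⟨x, hx⟩)‖₊ : ℝ≥0∞) ≤ C * (‖x‖₊ : ℝ≥0∞)})
    (a : Aˣ)
    (hpre : ∀ x ∈ dom, π (↑a⁻¹ : A) x ∈ dom) :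
    L (↑a⁻¹ : A) ≤ (‖(↑a⁻¹ : A)‖₊ : ℝ≥0∞) ^ 2 * L (↑a : A) := by
  let : CStarAlgebra A := {}
  have hTS : π ↑a * π ↑a⁻¹ = 1 := by rw [← map_mul, a.mul_inv, map_one]
  have hST : π ↑a⁻¹ * π ↑a = 1 := by rw [← map_mul, a.inv_mul, map_one]
  have hπ_le : (‖π ↑a⁻¹‖₊ : ℝ≥0∞) ≤ ‖(↑a⁻¹ : A)‖₊ := by
    exact_mod_cast NonUnitalStarAlgHom.nnnorm_apply_le π _
  rw [hL, hL]
  exact (sInf_commutatorBounds_le_of_inverse D hTS hST hpre).trans (by gcongr (?_ : ℝ≥0∞) ^ 2 * _)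

/-- The strong Leibniz property of commutator Lip-norms from spectral triples: if `π` is a
faithful unital *-representation of a unital C*-algebra `A` on a Hilbert space `H`, `D` is a
symmetric (densely defined, possibly unbounded) operator on `H`, and
`L(a) = ‖[D, π(a)]‖` (the least bound for the commutator, `∞` if none exists), then for
every invertible `a ∈ A` (whose inverse also preserves the domain of `D`),
`L(a⁻¹) ≤ ‖a⁻¹‖² · L(a)`. -/
theorem commutator_lipnorm_strong_leibniz {A H : Type*}
    [NormedRing A] [StarRing A] [CStarRing A] [NormedAlgebra ℂ A]
    [CompleteSpace A] [StarModule ℂ A]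
    [NormedAddCommGroup H] [InnerProductSpace ℂ H] [CompleteSpace H]
    (π : A →⋆ₐ[ℂ] (H →L[ℂ] H)) (hπ : Function.Injective π)
    (dom : Submodule ℂ H) (hdom : Dense (dom : Set H))
    (D : dom →ₗ[ℂ] H)
    (hD : ∀ x y : dom, (inner ℂ (D x) (y : H) : ℂ) = inner ℂ (x : H) (D y))
    (L : A → ℝ≥0∞)
    (hL : ∀ a : A, L a = sInf {C : ℝ≥0∞ |
      (∀ x ∈ dom, π a x ∈ dom) ∧
      ∀ (x : H) (hx : x ∈ dom) (hax : π a x ∈ dom),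
        (‖D ⟨π a x, hax⟩ - π a (D ⟨x, hx⟩)‖₊ : ℝ≥0∞) ≤ C * (‖x‖₊ : ℝ≥0∞)})
    (a : Aˣ)
    (hpre : ∀ x ∈ dom, π (↑a⁻¹ : A) x ∈ dom) :
    L (↑a⁻¹ : A) ≤ (‖(↑a⁻¹ : A)‖₊ : ℝ≥0∞) ^ 2 * L (↑a : A) :=
  commutator_lipnorm_strong_leibniz_general π dom D L hL a hpre
end

section
/- Let (A, L) be a unital Lipschitz pair such that the set {a ∈ sa(A) : L(a) ≤ 1, ‖a‖ ≤ 1} is totally bounded in norm and the Monge–Kantorovich metric mk_L has finite diameter on S(A). Then for any state μ ∈ S(A), the set {a ∈ sa(A) : L(a) ≤ 1, μ(a) = 0} is totally bounded in norm. -/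
/-!
For `a` in the centred set, choose `z` in the spectrum of `a` with `|z| = ‖a‖`. A character of
`C*(1, a)` taking the value `z` at `a`, extended to `A` by Hahn–Banach, is a unital contraction
and hence a state `φ`; so `‖a‖ = |φ a - μ a| ≤ mk_L(φ, μ) ≤ D`. The centred set therefore lies in
`max D 1` times the totally bounded set `{a : L a ≤ 1, ‖a‖ ≤ 1}`.
-/

open scoped ENNReal NNReal ComplexOrder

variable {A : Type*} [NormedRing A] [StarRing A] [CStarRing A]
  [NormedAlgebra ℂ A] [CompleteSpace A] [StarModule ℂ A]

section

variable {E : Type*} [NormedRing E] [StarRing E] [CStarRing E] [NormedAlgebra ℂ E]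
  [StarModule ℂ E] [Nontrivial E]

lemma IsSelfAdjoint.norm_add_I_smul_one_sq_le {b : E} (hb : IsSelfAdjoint b) (t : ℝ) :
    ‖b + ((t : ℂ) * Complex.I) • (1 : E)‖ ^ 2 ≤ ‖b‖ ^ 2 + t ^ 2 := by
  set c : ℂ := t * Complex.I
  have hc : star c = -c := by simp [c]
  have hcc : c * -c = (t ^ 2 : ℝ) := by simp [c]; ring_nf; simp
  have hstar : star (b + c • (1 : E)) * (b + c • 1) = b * b + (c * -c) • (1 : E) := by
    simp only [star_add, star_smul, hb.star_eq, star_one, hc, add_mul, mul_add, smul_mul_assoc,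
      mul_smul_comm, one_mul, mul_one]
    module
  calc ‖b + c • (1 : E)‖ ^ 2 = ‖b * b + ((t ^ 2 : ℝ) : ℂ) • (1 : E)‖ := by
        rw [sq, ← CStarRing.norm_star_mul_self, hstar, hcc]
    _ ≤ ‖b * b‖ + ‖((t ^ 2 : ℝ) : ℂ) • (1 : E)‖ := norm_add_le _ _
    _ = ‖b‖ ^ 2 + t ^ 2 := by
        rw [hb.norm_mul_self, norm_smul, norm_one, mul_one, Complex.norm_real,
          Real.norm_of_nonneg (sq_nonneg t)]

/- `|φ b + i t| ≤ ‖b + i t‖` for all real `t`; expanding both squares leaves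
`2 t Im (φ b) ≤ ‖b‖²`, which is impossible for all `t` unless `Im (φ b) = 0`. -/
lemma im_apply_eq_zero_of_isSelfAdjoint {φ : E →L[ℂ] ℂ} (hφ : ‖φ‖ ≤ 1) (hφ1 : φ 1 = 1)
    {b : E} (hb : IsSelfAdjoint b) : (φ b).im = 0 := by
  have key : ∀ t : ℝ, 2 * t * (φ b).im ≤ ‖b‖ ^ 2 := fun t ↦ by
    set x := b + ((t : ℂ) * Complex.I) • (1 : E)
    have hφx : φ x = φ b + t * Complex.I := by
      rw [map_add, map_smul, hφ1, smul_eq_mul, mul_one]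
    have hsq := pow_le_pow_left₀ (norm_nonneg _)
      ((φ.le_of_opNorm_le hφ x).trans_eq (one_mul _)) 2
    rw [hφx, Complex.sq_norm, Complex.normSq_apply] at hsq
    simp only [Complex.add_re, Complex.mul_re, Complex.ofReal_re, Complex.I_re, mul_zero,
      Complex.ofReal_im, Complex.I_im, mul_one, sub_self, add_zero, Complex.add_im,
      Complex.mul_im] at hsq
    nlinarith [hb.norm_add_I_smul_one_sq_le t]
  by_contra h
  have := key ((‖b‖ ^ 2 + 1) / (2 * (φ b).im))
  field_simp at this
  linarith

end

lemma isState_of_norm_le_one_of_map_one [Nontrivial A] {φ : A →L[ℂ] ℂ} (hφ : ‖φ‖ ≤ 1)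
    (hφ1 : φ 1 = 1) : IsState φ := by
  let _ : CStarAlgebra A := ⟨⟩
  -- `A` carries no order of its own; in the spectral order `0 ≤ star x * x ≤ ‖star x * x‖`.
  let _ := CStarAlgebra.spectralOrder A
  have _ := CStarAlgebra.spectralOrderedRing A
  refine ⟨hφ1, fun x ↦ ?_⟩
  set b := star x * x
  have hb : 0 ≤ b := star_mul_self_nonneg x
  have hcb : ‖algebraMap ℝ A ‖b‖ - b‖ ≤ ‖b‖ := by
    rw [CStarAlgebra.norm_le_iff_le_algebraMap _ (norm_nonneg b)
      (sub_nonneg.2 (IsSelfAdjoint.le_algebraMap_norm_self hb.isSelfAdjoint))]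
    exact sub_le_self _ hb
  have hre : ‖b‖ - (φ b).re ≤ ‖b‖ :=
    calc ‖b‖ - (φ b).re = (φ (algebraMap ℝ A ‖b‖ - b)).re := by
          simp [Algebra.algebraMap_eq_smul_one, hφ1]
      _ ≤ ‖algebraMap ℝ A ‖b‖ - b‖ :=
          (Complex.re_le_norm _).trans ((φ.le_of_opNorm_le hφ _).trans_eq (one_mul _))
      _ ≤ ‖b‖ := hcb
  exact Complex.le_def.2
    ⟨by simpa using hre, (im_apply_eq_zero_of_isSelfAdjoint hφ hφ1 hb.isSelfAdjoint).symm⟩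

open WeakDual StarAlgebra in
lemma exists_norm_le_one_map_one_apply_eq_of_mem_spectrum [Nontrivial A] {a : A}
    [IsStarNormal a] {z : ℂ} (hz : z ∈ spectrum ℂ a) :
    ∃ φ : A →L[ℂ] ℂ, ‖φ‖ ≤ 1 ∧ φ 1 = 1 ∧ φ a = z := by
  let _ : CStarAlgebra A := ⟨⟩
  obtain ⟨χ, hχ⟩ := (elemental.bijective_characterSpaceToSpectrum a).2 ⟨z, hz⟩
  obtain ⟨φ, hφχ, hφ⟩ := exists_extension_norm_eq (elemental ℂ a).toSubalgebra.toSubmodule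
    (toStrongDual (χ : WeakDual ℂ (elemental ℂ a)))
  refine ⟨φ, hφ ▸ ?_, ?_, ?_⟩
  · exact (CharacterSpace.norm_le_norm_one χ).trans CStarRing.norm_one.le
  · exact (hφχ ⟨1, (elemental ℂ a).one_mem⟩).trans (map_one χ)
  · exact (hφχ ⟨a, elemental.self_mem ℂ a⟩).trans (congrArg Subtype.val hχ)

lemma IsSelfAdjoint.exists_isState_norm_apply_eq_s19 [Nontrivial A] {a : A}
    (ha : IsSelfAdjoint a) : ∃ φ : A →L[ℂ] ℂ, IsState φ ∧ ‖φ a‖ = ‖a‖ := by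
  let _ : CStarAlgebra A := ⟨⟩
  obtain ⟨z, hz, hza⟩ := spectrum.exists_nnnorm_eq_spectralRadius a
  have := ha.isStarNormal
  obtain ⟨φ, hφ, hφ1, hφa⟩ := exists_norm_le_one_map_one_apply_eq_of_mem_spectrum hz
  refine ⟨φ, isState_of_norm_le_one_of_map_one hφ hφ1, ?_⟩
  rw [hφa, ← coe_nnnorm, ← coe_nnnorm a]
  exact_mod_cast hza.trans ha.spectralRadius_eq_nnnorm

lemma norm_le_of_mkDist_le {L : A → ℝ≥0∞} {D : ℝ≥0}
    (hD : ∀ φ ψ : A →L[ℂ] ℂ, IsState φ → IsState ψ → mkDist L φ ψ ≤ (D : ℝ≥0∞))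
    {μ : A →L[ℂ] ℂ} (hμ : IsState μ) {a : A} (ha : IsSelfAdjoint a) (hLa : L a ≤ 1)
    (hμa : μ a = 0) : ‖a‖ ≤ D := by
  rcases subsingleton_or_nontrivial A with _ | _
  · simp [Subsingleton.elim a 0]
  obtain ⟨φ, hφ, hφa⟩ := ha.exists_isState_norm_apply_eq_s19
  have : (‖φ a - μ a‖₊ : ℝ≥0∞) ≤ D :=
    (le_iSup₂ (f := fun b (_ : IsSelfAdjoint b ∧ L b ≤ 1) ↦ (‖φ b - μ b‖₊ : ℝ≥0∞))
      a ⟨ha, hLa⟩).trans (hD φ μ hφ hμ)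
  rw [hμa, sub_zero] at this
  rw [← hφa, ← coe_nnnorm]
  exact_mod_cast this

lemma totallyBounded_of_forall_norm_le {E : Type*} [NormedAddCommGroup E] [NormedSpace ℝ E]
    [Star E] [StarModule ℝ E] {L : E → ℝ≥0∞}
    (hsmul : ∀ (t : ℝ) (a : E), L (t • a) = (‖t‖₊ : ℝ≥0∞) * L a)
    (htb : TotallyBounded {a : E | IsSelfAdjoint a ∧ L a ≤ 1 ∧ ‖a‖ ≤ 1})
    {s : Set E} {R : ℝ} (hs : ∀ a ∈ s, IsSelfAdjoint a ∧ L a ≤ 1 ∧ ‖a‖ ≤ R) :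
    TotallyBounded s := by
  set C := max R 1
  have hC : 0 < C := lt_max_of_lt_right one_pos
  have hC_inv : ‖C⁻¹‖₊ ≤ 1 := by
    rw [← NNReal.coe_le_one, coe_nnnorm, norm_inv, Real.norm_of_nonneg hC.le]
    exact inv_le_one_of_one_le₀ (le_max_right R 1)
  refine (htb.image (uniformContinuous_const_smul C)).subset fun a has ↦ ?_
  obtain ⟨ha, hLa, haR⟩ := hs a has
  refine ⟨C⁻¹ • a, ⟨.smul (.all C⁻¹) ha, ?_, ?_⟩, smul_inv_smul₀ hC.ne' a⟩
  · rw [hsmul]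
    exact mul_le_one' (by exact_mod_cast hC_inv) hLa
  · rw [norm_smul, norm_inv, Real.norm_of_nonneg hC.le, inv_mul_le_one₀ hC]
    exact haR.trans (le_max_left R 1)

theorem totallyBounded_centered_of_totallyBounded_ball_general (L : A → ℝ≥0∞)
    (hsmul : ∀ (t : ℝ) (a : A), L (t • a) = (‖t‖₊ : ℝ≥0∞) * L a)
    (htb : TotallyBounded {a : A | IsSelfAdjoint a ∧ L a ≤ 1 ∧ ‖a‖ ≤ 1})
    (D : ℝ≥0)
    (hD : ∀ φ ψ : A →L[ℂ] ℂ, IsState φ → IsState ψ → mkDist L φ ψ ≤ (D : ℝ≥0∞)) :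
    ∀ μ : A →L[ℂ] ℂ, IsState μ →
      TotallyBounded {a : A | IsSelfAdjoint a ∧ L a ≤ 1 ∧ μ a = 0} := fun _ hμ ↦
  totallyBounded_of_forall_norm_le hsmul htb fun _ ⟨ha, hLa, hμa⟩ ↦
    ⟨ha, hLa, norm_le_of_mkDist_le hD hμ ha hLa hμa⟩

/-- If `(A, L)` is a unital Lipschitz pair for which
`{a ∈ sa(A) : L(a) ≤ 1, ‖a‖ ≤ 1}` is totally bounded in norm and whose Monge–Kantorovich
metric has finite diameter (bounded by `D`) on the state space, then for every state `μ`
the set `{a ∈ sa(A) : L(a) ≤ 1, μ(a) = 0}` is totally bounded in norm. -/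
theorem totallyBounded_centered_of_totallyBounded_ball (L : A → ℝ≥0∞)
    (hadd : ∀ a b : A, L (a + b) ≤ L a + L b)
    (hsmul : ∀ (t : ℝ) (a : A), L (t • a) = (‖t‖₊ : ℝ≥0∞) * L a)
    (hker : ∀ a : A, IsSelfAdjoint a → (L a = 0 ↔ ∃ t : ℝ, a = t • (1 : A)))
    (htb : TotallyBounded {a : A | IsSelfAdjoint a ∧ L a ≤ 1 ∧ ‖a‖ ≤ 1})
    (D : ℝ≥0)
    (hD : ∀ φ ψ : A →L[ℂ] ℂ, IsState φ → IsState ψ → mkDist L φ ψ ≤ (D : ℝ≥0∞)) :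
    ∀ μ : A →L[ℂ] ℂ, IsState μ →
      TotallyBounded {a : A | IsSelfAdjoint a ∧ L a ≤ 1 ∧ μ a = 0} :=
  totallyBounded_centered_of_totallyBounded_ball_general L hsmul htb D hD
end
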